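/- arXiv:1403.3763 — 6 statements merged into one kernel-verified Lean document; each statement's English description precedes it below -/
import Mathlib

section
/- Let (e_j) be an orthonormal family in a Hilbert space H, and on the Boolean Fock space Γ(H) set b_j := b(e_j), b†_j := b†(e_j). Then the operators ε_{##} := b_i b†_i (independent of i), ε_{#j} := b_j, ε_{j#} := b†_j, and ε_{ij} := b†_i b_j satisfy the matrix-unit relations: ε_{mn} ε_{pq} = δ_{np} ε_{mq} and ε_{mn}* = ε_{nm}, for indices m, n, p, q ranging over {#} ∪ the index set. -/
/-!
The vacuum `(1, 0)` together with the one-particle vectors `(0, e j)` form an orthonormal family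
`v : Option J → ℂ × H`, and each `ε m n` is the rank-one operator `|v m⟩⟨v n|`: the annihilator
`b (e j)` is `|v none⟩⟨v (some j)|`, the creator `b† (e j)` is `|v (some j)⟩⟨v none|`, and the two
composite cases follow from the composition rule. For rank-one operators built from an orthonormal
family, `|u⟩⟨v| ∘ |w⟩⟨z| = ⟨v, w⟩ |u⟩⟨z|` and `|u⟩⟨v|* = |v⟩⟨u|` are exactly the matrix-unit relations.
-/

open InnerProductSpace

theorem Orthonormal.rankOne_comp_rankOne {𝕜 E ι : Type*} [RCLike 𝕜] [NormedAddCommGroup E]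
    [InnerProductSpace 𝕜 E] [DecidableEq ι] {v : ι → E} (hv : Orthonormal 𝕜 v) (m n p q : ι) :
    rankOne 𝕜 (v m) (v n) ∘L rankOne 𝕜 (v p) (v q) = if n = p then rankOne 𝕜 (v m) (v q) else 0 := by
  rw [InnerProductSpace.rankOne_comp_rankOne, orthonormal_iff_ite.mp hv]
  split_ifs <;> simp

namespace BooleanFock

variable (𝕜 : Type*) {E ι : Type*} [RCLike 𝕜] [NormedAddCommGroup E] [InnerProductSpace 𝕜 E]

def fockVector (e : ι → E) : Option ι → WithLp 2 (𝕜 × E)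
  | none => WithLp.toLp 2 (1, 0)
  | some j => WithLp.toLp 2 (0, e j)

variable {𝕜}

theorem orthonormal_fockVector {e : ι → E} (he : Orthonormal 𝕜 e) :
    Orthonormal 𝕜 (fockVector 𝕜 e) := by
  classical
  rw [orthonormal_iff_ite] at he ⊢
  rintro (_ | i) (_ | j) <;> simp [fockVector, WithLp.prod_inner_apply, he]

theorem rankOne_vacuum_particle_apply (f : E) (x : WithLp 2 (𝕜 × E)) :
    rankOne 𝕜 (WithLp.toLp 2 ((1 : 𝕜), (0 : E))) (WithLp.toLp 2 ((0 : 𝕜), f)) x =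
      (WithLp.equiv 2 (𝕜 × E)).symm (inner 𝕜 f (WithLp.equiv 2 (𝕜 × E) x).2, 0) := by
  simp [WithLp.ext_iff, WithLp.prod_inner_apply]

theorem rankOne_particle_vacuum_apply (f : E) (x : WithLp 2 (𝕜 × E)) :
    rankOne 𝕜 (WithLp.toLp 2 ((0 : 𝕜), f)) (WithLp.toLp 2 ((1 : 𝕜), (0 : E))) x =
      (WithLp.equiv 2 (𝕜 × E)).symm (0, (WithLp.equiv 2 (𝕜 × E) x).1 • f) := by
  simp [WithLp.ext_iff, WithLp.prod_inner_apply]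

end BooleanFock

open BooleanFock in
/-- For an orthonormal family `(e_j)_{j∈J}` in `H`, the operators
`ε_{##} := b_i b†_i` (independent of `i`), `ε_{#j} := b_j`, `ε_{j#} := b†_j`,
`ε_{ij} := b†_i b_j` on the Boolean Fock space `Γ(H) = ℂ ⊕ H` satisfy the
matrix-unit relations `ε_{mn} ε_{pq} = δ_{np} ε_{mq}` and `ε_{mn}* = ε_{nm}`,
for indices in `{#} ∪ J` (encoded as `Option J`, `none = #`). -/
theorem boolean_matrix_units
    (H : Type*) [NormedAddCommGroup H] [InnerProductSpace ℂ H] [CompleteSpace H]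
    (J : Type*) [DecidableEq J] [Nonempty J]
    (e : J → H) (he : Orthonormal ℂ e)
    (b bd : H → (WithLp 2 (ℂ × H) →L[ℂ] WithLp 2 (ℂ × H)))
    (hb : ∀ (f : H) (x : WithLp 2 (ℂ × H)),
      b f x = (WithLp.equiv 2 (ℂ × H)).symm ((inner ℂ f (WithLp.equiv 2 (ℂ × H) x).2 : ℂ), (0 : H)))
    (hbd : ∀ (f : H) (x : WithLp 2 (ℂ × H)),
      bd f x = (WithLp.equiv 2 (ℂ × H)).symm ((0 : ℂ), (WithLp.equiv 2 (ℂ × H) x).1 • f))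
    (ε : Option J → Option J → (WithLp 2 (ℂ × H) →L[ℂ] WithLp 2 (ℂ × H)))
    (hε1 : ∀ j : J, ε none (some j) = b (e j))
    (hε2 : ∀ j : J, ε (some j) none = bd (e j))
    (hε3 : ∀ i : J, ε none none = b (e i) ∘L bd (e i))
    (hε4 : ∀ i j : J, ε (some i) (some j) = bd (e i) ∘L b (e j)) :
    (∀ m n p q : Option J,
        ε m n ∘L ε p q = if n = p then ε m q else 0)
    ∧ (∀ m n : Option J,
        ContinuousLinearMap.adjoint (ε m n) = ε n m) := by
  set v := fockVector ℂ e
  have hv : Orthonormal ℂ v := orthonormal_fockVector he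
  have hb_eq (j : J) : b (e j) = rankOne ℂ (v none) (v (some j)) := by
    ext1 x
    rw [hb]
    exact (rankOne_vacuum_particle_apply _ x).symm
  have hbd_eq (j : J) : bd (e j) = rankOne ℂ (v (some j)) (v none) := by
    ext1 x
    rw [hbd]
    exact (rankOne_particle_vacuum_apply _ x).symm
  have hε (m n : Option J) : ε m n = rankOne ℂ (v m) (v n) := by
    obtain ⟨i⟩ := ‹Nonempty J›
    rcases m with _ | m <;> rcases n with _ | n
    · simp [hε3 i, hb_eq, hbd_eq, hv.rankOne_comp_rankOne]
    · rw [hε1, hb_eq]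
    · rw [hε2, hbd_eq]
    · simp [hε4, hb_eq, hbd_eq, hv.rankOne_comp_rankOne]
  refine ⟨fun m n p q => ?_, fun m n => ?_⟩
  · simp only [hε, hv.rankOne_comp_rankOne]
  · rw [hε, hε, adjoint_rankOne]
end

section
/- Let T = Σ_k λ_k ⟨·, ξ_k⟩ξ_k be a positive trace-class operator with Tr(T) = 1 on a Hilbert space H (spectral decomposition with orthonormal eigenvectors ξ_k and λ_k > 0), and suppose the unit vector e_# is NOT an eigenvector of T but ⟨e_#, ξ_{j₀}⟩ ≠ 0 for some j₀ with λ_{j₀} maximal among {λ_k : ⟨e_#, ξ_k⟩ ≠ 0}. Then for the rank-one operator X := ⟨·, ξ_{j₀}⟩ e_# one has |Σ_k (λ_k/λ_{j₀}) |⟨e_#, ξ_k⟩|²| < Σ_k |⟨e_#, ξ_k⟩|² ≤ 1; in particular Tr(T·(⟨X e_#, e_#⟩ P_#)) ≠ Tr(T X) whenever the left inequality is strict, showing no conditional expectation of the form F_φ(A) = ⟨A e_#, e_#⟩P_# + φ(P_#^⊥AP_#^⊥)P_#^⊥ preserves ψ_T = Tr(T ·). -/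
/-!
Write `a k = ‖⟪e_#, ξ_k⟫‖²`. Bessel's inequality gives `∑ a k ≤ 1`. On the support of `a` the
weights `λ_k / λ_{j₀}` are at most `1`, and the infimum hypothesis produces an index in the
support where the weight is strictly below `1`, so `∑ (λ_k / λ_{j₀}) a k < ∑ a k ≤ 1`, i.e.
`∑ λ_k a k < λ_{j₀}`. On the other hand `ψ_T(⟨X e_#, e_#⟩ P_#) = ⟨ξ_{j₀}, e_#⟩ ∑ λ_k a k` while,
by orthonormality, `ψ_T(X) = λ_{j₀} ⟨ξ_{j₀}, e_#⟩`, and `⟨ξ_{j₀}, e_#⟩ ≠ 0`.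
-/

open scoped InnerProductSpace

theorem Orthonormal.tsum_norm_inner_sq_le {𝕜 E ι : Type*} [RCLike 𝕜] [SeminormedAddCommGroup E]
    [InnerProductSpace 𝕜 E] {ξ : ι → E} (hξ : Orthonormal 𝕜 ξ) (x : E) :
    ∑' k, ‖⟪x, ξ k⟫_𝕜‖ ^ 2 ≤ ‖x‖ ^ 2 := by
  simpa only [norm_inner_symm x] using hξ.tsum_inner_products_le x

theorem Orthonormal.summable_norm_inner_sq {𝕜 E ι : Type*} [RCLike 𝕜] [SeminormedAddCommGroup E]
    [InnerProductSpace 𝕜 E] {ξ : ι → E} (hξ : Orthonormal 𝕜 ξ) (x : E) :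
    Summable fun k => ‖⟪x, ξ k⟫_𝕜‖ ^ 2 := by
  simpa only [norm_inner_symm x] using hξ.inner_products_summable x

theorem inner_inner_smul_eq_norm_sq {𝕜 E : Type*} [RCLike 𝕜] [SeminormedAddCommGroup E]
    [InnerProductSpace 𝕜 E] (x y : E) :
    ⟪y, ⟪x, y⟫_𝕜 • x⟫_𝕜 = ((‖⟪x, y⟫_𝕜‖ ^ 2 : ℝ) : 𝕜) := by
  rw [inner_smul_right, ← inner_conj_symm y x, RCLike.mul_conj]
  push_cast
  rfl

theorem tsum_mul_inner_smul_inner_smul {𝕜 E ι : Type*} [RCLike 𝕜] [SeminormedAddCommGroup E]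
    [InnerProductSpace 𝕜 E] (ξ : ι → E) (μ : ι → ℝ) (c : 𝕜) (e : E) :
    ∑' k, (μ k : 𝕜) * ⟪ξ k, c • ⟪e, ξ k⟫_𝕜 • e⟫_𝕜 =
      c * ((∑' k, μ k * ‖⟪e, ξ k⟫_𝕜‖ ^ 2 : ℝ) : 𝕜) := by
  rw [RCLike.ofReal_tsum, ← tsum_mul_left]
  refine tsum_congr fun k => ?_
  rw [inner_smul_right, inner_inner_smul_eq_norm_sq, RCLike.ofReal_mul]
  ring

theorem Orthonormal.tsum_mul_inner_inner_smul {𝕜 E ι : Type*} [RCLike 𝕜]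
    [NormedAddCommGroup E] [InnerProductSpace 𝕜 E] {ξ : ι → E} (hξ : Orthonormal 𝕜 ξ)
    (μ : ι → 𝕜) (j : ι) (v : E) :
    ∑' k, μ k * ⟪ξ k, ⟪ξ j, ξ k⟫_𝕜 • v⟫_𝕜 = μ j * ⟪ξ j, v⟫_𝕜 := by
  rw [tsum_eq_single j fun k hk => by rw [hξ.inner_eq_zero hk.symm, zero_smul, inner_zero_right,
    mul_zero], inner_self_eq_one_of_norm_eq_one (hξ.norm_eq_one j), one_smul]

theorem tsum_mul_lt_tsum_of_le_one {ι : Type*} {a w : ι → ℝ} (ha : ∀ k, 0 ≤ a k)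
    (hs : Summable a) (hw₀ : ∀ k, 0 ≤ w k) (hw₁ : ∀ k, a k ≠ 0 → w k ≤ 1)
    {k₀ : ι} (hak₀ : a k₀ ≠ 0) (hwk₀ : w k₀ < 1) :
    ∑' k, w k * a k < ∑' k, a k := by
  have hle : ∀ k, w k * a k ≤ a k := fun k => by
    rcases eq_or_ne (a k) 0 with hk | hk
    · simp [hk]
    · exact mul_le_of_le_one_left (ha k) (hw₁ k hk)
  have hlt : w k₀ * a k₀ < a k₀ :=
    mul_lt_of_lt_one_left ((ha k₀).lt_of_ne' hak₀) hwk₀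
  exact Summable.tsum_lt_tsum hle hlt
    (.of_nonneg_of_le (fun k => mul_nonneg (hw₀ k) (ha k)) hle hs) hs

theorem no_expectation_if_not_eigenvector_general
    (H : Type*) [NormedAddCommGroup H] [InnerProductSpace ℂ H]
    (esharp : H) (he : ‖esharp‖ = 1)
    (P : H →L[ℂ] H) (hP : ∀ x, P x = (inner ℂ esharp x : ℂ) • esharp)
    (ξ : ℕ → H) (hξ : Orthonormal ℂ ξ)
    (lamk : ℕ → ℝ) (hlamk : ∀ k, 0 < lamk k)
    (ψT : (H →L[ℂ] H) → ℂ)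
    (hψT : ∀ Y, ψT Y = ∑' k, (lamk k : ℂ) * (inner ℂ (ξ k) (Y (ξ k)) : ℂ))
    (j₀ : ℕ) (hj₀ : (inner ℂ esharp (ξ j₀) : ℂ) ≠ 0)
    (hmax : ∀ k, (inner ℂ esharp (ξ k) : ℂ) ≠ 0 → lamk k ≤ lamk j₀)
    (hinf : sInf {r : ℝ | ∃ k, (inner ℂ esharp (ξ k) : ℂ) ≠ 0 ∧ r = lamk k} < lamk j₀)
    (X : H →L[ℂ] H) (hX : ∀ v, X v = (inner ℂ (ξ j₀) v : ℂ) • esharp) :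
    |∑' k, (lamk k / lamk j₀) * ‖(inner ℂ esharp (ξ k) : ℂ)‖ ^ 2|
        < ∑' k, ‖(inner ℂ esharp (ξ k) : ℂ)‖ ^ 2
    ∧ ∑' k, ‖(inner ℂ esharp (ξ k) : ℂ)‖ ^ 2 ≤ 1
    ∧ ψT ((inner ℂ esharp (X esharp) : ℂ) • P) ≠ ψT X := by
  set a : ℕ → ℝ := fun k => ‖⟪esharp, ξ k⟫_ℂ‖ ^ 2 with ha
  have hj₀pos := hlamk j₀
  have hw₀ : ∀ k, 0 ≤ lamk k / lamk j₀ := fun k => div_nonneg (hlamk k).le hj₀pos.le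
  have hbessel : ∑' k, a k ≤ 1 := by simpa [he] using hξ.tsum_norm_inner_sq_le esharp
  obtain ⟨_, ⟨k₀, hk₀, rfl⟩, hk₀lt⟩ := exists_lt_of_csInf_lt (by exact ⟨_, j₀, hj₀, rfl⟩) hinf
  have hlt : ∑' k, (lamk k / lamk j₀) * a k < ∑' k, a k :=
    tsum_mul_lt_tsum_of_le_one (fun k => sq_nonneg _) (hξ.summable_norm_inner_sq esharp) hw₀
      (fun k hk => (div_le_one hj₀pos).mpr (hmax k (by simpa [ha] using hk)))
      (by simpa [ha] using hk₀) ((div_lt_one hj₀pos).mpr hk₀lt)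
  have hweighted : ∑' k, lamk k * a k < lamk j₀ := calc
    ∑' k, lamk k * a k = lamk j₀ * ∑' k, (lamk k / lamk j₀) * a k := by
      rw [← tsum_mul_left]; congr 1; ext k; field_simp
    _ < lamk j₀ * 1 := by gcongr; exact hlt.trans_le hbessel
    _ = lamk j₀ := mul_one _
  refine ⟨(abs_of_nonneg (tsum_nonneg fun k => mul_nonneg (hw₀ k) (sq_nonneg _))).trans_lt hlt,
    hbessel, ?_⟩
  have hXe : ⟪esharp, X esharp⟫_ℂ = ⟪ξ j₀, esharp⟫_ℂ := by
    rw [hX, inner_smul_right, inner_self_eq_one_of_norm_eq_one he, mul_one]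
  have hc : ⟪ξ j₀, esharp⟫_ℂ ≠ 0 := by rwa [← inner_conj_symm, map_ne_zero]
  rw [hXe]
  simp only [hψT, hX, hP, smul_apply, hξ.tsum_mul_inner_inner_smul, mul_comm (lamk j₀ : ℂ)]
  refine (tsum_mul_inner_smul_inner_smul ξ lamk _ esharp).trans_ne ?_
  exact (mul_right_injective₀ hc).ne (Complex.ofReal_injective.ne hweighted.ne)

/-- If `e_#` is a unit vector which is NOT an eigenvector of the
positive trace-class operator `T = Σ_k λ_k⟨·,ξ_k⟩ξ_k` (`Tr T = 1`, `λ_k > 0`,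
`(ξ_k)` orthonormal), and `λ_{j₀}` is maximal among `{λ_k : ⟨e_#,ξ_k⟩ ≠ 0}`
with `inf_{j∈J} λ_j < λ_{j₀}`, then for the rank-one operator
`X := ⟨·,ξ_{j₀}⟩e_#` one has
`|Σ_k (λ_k/λ_{j₀})|⟨e_#,ξ_k⟩|²| < Σ_k |⟨e_#,ξ_k⟩|² ≤ 1`; in particular
`Tr(T(⟨Xe_#,e_#⟩P_#)) ≠ Tr(TX)`, so no conditional expectation of the given
form preserves `ψ_T`. -/
theorem no_expectation_if_not_eigenvector
    (H : Type*) [NormedAddCommGroup H] [InnerProductSpace ℂ H] [CompleteSpace H]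
    (esharp : H) (he : ‖esharp‖ = 1)
    (P : H →L[ℂ] H) (hP : ∀ x, P x = (inner ℂ esharp x : ℂ) • esharp)
    (ξ : ℕ → H) (hξ : Orthonormal ℂ ξ)
    (lamk : ℕ → ℝ) (hlamk : ∀ k, 0 < lamk k)
    (hlamsum : HasSum lamk 1)
    (T : H →L[ℂ] H)
    (hT : ∀ x, HasSum (fun k => (lamk k : ℂ) • ((inner ℂ (ξ k) x : ℂ) • ξ k)) (T x))
    (hnoteig : ∀ μ : ℂ, T esharp ≠ μ • esharp)
    (ψT : (H →L[ℂ] H) → ℂ)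
    (hψT : ∀ Y, ψT Y = ∑' k, (lamk k : ℂ) * (inner ℂ (ξ k) (Y (ξ k)) : ℂ))
    (hψTsum : ∀ Y : H →L[ℂ] H,
      Summable (fun k => (lamk k : ℂ) * (inner ℂ (ξ k) (Y (ξ k)) : ℂ)))
    (j₀ : ℕ) (hj₀ : (inner ℂ esharp (ξ j₀) : ℂ) ≠ 0)
    (hmax : ∀ k, (inner ℂ esharp (ξ k) : ℂ) ≠ 0 → lamk k ≤ lamk j₀)
    (hinf : sInf {r : ℝ | ∃ k, (inner ℂ esharp (ξ k) : ℂ) ≠ 0 ∧ r = lamk k} < lamk j₀)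
    (X : H →L[ℂ] H) (hX : ∀ v, X v = (inner ℂ (ξ j₀) v : ℂ) • esharp) :
    |∑' k, (lamk k / lamk j₀) * ‖(inner ℂ esharp (ξ k) : ℂ)‖ ^ 2|
        < ∑' k, ‖(inner ℂ esharp (ξ k) : ℂ)‖ ^ 2
    ∧ ∑' k, ‖(inner ℂ esharp (ξ k) : ℂ)‖ ^ 2 ≤ 1
    ∧ ψT ((inner ℂ esharp (X esharp) : ℂ) • P) ≠ ψT X :=
  no_expectation_if_not_eigenvector_general H esharp he P hP ξ hξ lamk hlamk ψT hψT j₀ hj₀ hmax hinf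
    X hX
end

section
/- There exists a conditional expectation of the form F_φ(A) = ⟨A e_#, e_#⟩P_# + φ(P_#^⊥ A P_#^⊥)P_#^⊥ onto ℂP_# ⊕ ℂP_#^⊥ preserving the normal state ψ_T(A) = Tr(TA) if and only if e_# is an eigenvector of T. -/
/-!
Write `Q = 1 - P_#`. For `v ⊥ e_#` the operator `X = ⟪v, ·⟫ e_#` satisfies `⟪e_#, X e_#⟫ = 0` and
`Q X = 0`, so `F_φ(X) = 0` and preservation gives `⟪v, T e_#⟫ = ψ_T(X) = 0`; hence `T e_# ∈ ℂ e_#`.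

Conversely, let `T e_# = μ e_#`. Splitting `X = P_# X + Q X P_# + Q X Q`, the middle term
contributes `⟪T e_#, Q X e_#⟫ = 0` because `T` is self-adjoint, so
`ψ_T(X) = μ ⟪e_#, X e_#⟫ + ψ_T(Q X Q)` with `μ = ψ_T(P_#)`. Preservation thus reduces to
`φ(Q X Q) ψ_T(Q) = ψ_T(Q X Q)`: take `φ = ψ_T(Q · Q) / ψ_T(Q)` if `ψ_T(Q) ≠ 0`; if `ψ_T(Q) = 0`,
every `ξ_k` of positive weight is killed by `Q`, so `ψ_T(Q X Q) = 0` and `φ = ψ_T` will do.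
-/

open scoped ComplexOrder InnerProductSpace

section

open ContinuousLinearMap

variable {H : Type*} [NormedAddCommGroup H] [InnerProductSpace ℂ H]

section DiagonalForm

variable {ξ : ℕ → H} {lam : ℕ → ℝ} {ψ : (H →L[ℂ] H) → ℂ}

theorem isLinearMap_of_hasSum_diagonal
    (hψ : ∀ Y, HasSum (fun k => (lam k : ℂ) * ⟪ξ k, Y (ξ k)⟫_ℂ) (ψ Y)) : IsLinearMap ℂ ψ where
  map_add Y Z := (hψ (Y + Z)).unique <| by
    simpa only [add_apply, inner_add_right, mul_add] using (hψ Y).add (hψ Z)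
  map_smul c Y := (hψ (c • Y)).unique <| by
    simpa only [smul_apply, inner_smul_right, mul_left_comm, smul_eq_mul] using (hψ Y).mul_left c

theorem apply_smulRight_of_hasSum_diagonal
    (hψ : ∀ Y, HasSum (fun k => (lam k : ℂ) * ⟪ξ k, Y (ξ k)⟫_ℂ) (ψ Y)) {T : H →L[ℂ] H}
    (hT : ∀ x, HasSum (fun k => (lam k : ℂ) • ⟪ξ k, x⟫_ℂ • ξ k) (T x))
    (f : H →L[ℂ] ℂ) (v : H) : ψ (f.smulRight v) = f (T v) :=
  (hψ _).unique <| by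
    convert (hT v).mapL f using 2 with k
    simp only [smulRight_apply, inner_smul_right, map_smul, smul_eq_mul]
    ring

theorem isSymmetric_of_hasSum_diagonal {T : H →L[ℂ] H}
    (hT : ∀ x, HasSum (fun k => (lam k : ℂ) • ⟪ξ k, x⟫_ℂ • ξ k) (T x)) :
    (T : H →ₗ[ℂ] H).IsSymmetric := fun x y => by
  change ⟪T x, y⟫_ℂ = ⟪x, T y⟫_ℂ
  have hx := Complex.hasSum_conj'.mpr ((hT x).mapL (innerSL ℂ y))
  simp only [innerSL_apply_apply, inner_conj_symm, inner_smul_right, map_mul,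
    Complex.conj_ofReal] at hx
  refine hx.unique (((hT y).mapL (innerSL ℂ x)).congr_fun fun k => ?_)
  simp only [innerSL_apply_apply, inner_smul_right]
  ring

theorem nonneg_of_hasSum_diagonal
    (hψ : ∀ Y, HasSum (fun k => (lam k : ℂ) * ⟪ξ k, Y (ξ k)⟫_ℂ) (ψ Y)) (hlam : ∀ k, 0 ≤ lam k)
    {A : H →L[ℂ] H} (hA : A.IsPositive) : 0 ≤ ψ A :=
  (hψ A).nonneg fun k => mul_nonneg (Complex.zero_le_real.mpr (hlam k)) (hA.inner_nonneg_right _)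

theorem apply_one_of_hasSum_diagonal
    (hψ : ∀ Y, HasSum (fun k => (lam k : ℂ) * ⟪ξ k, Y (ξ k)⟫_ℂ) (ψ Y)) (hξ : ∀ k, ‖ξ k‖ = 1)
    (hlam : HasSum lam 1) : ψ 1 = 1 :=
  (hψ 1).unique <| by
    simpa [inner_self_eq_norm_sq_to_K, hξ] using Complex.hasSum_ofReal.mpr hlam

theorem apply_compression_eq_zero_of_hasSum_diagonal
    (hψ : ∀ Y, HasSum (fun k => (lam k : ℂ) * ⟪ξ k, Y (ξ k)⟫_ℂ) (ψ Y)) (hlam : ∀ k, 0 ≤ lam k)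
    (K : Submodule ℂ H) [K.HasOrthogonalProjection] (hK : ψ K.starProjection = 0)
    (X : H →L[ℂ] H) : ψ (K.starProjection ∘L X ∘L K.starProjection) = 0 := by
  set Q := K.starProjection
  have hQ : ∀ x, ⟪x, Q x⟫_ℂ = ⟪Q x, Q x⟫_ℂ := fun x => by
    rw [K.inner_starProjection_left_eq_right,
      K.starProjection_eq_self_iff.mpr (K.starProjection_apply_mem x)]
  have hterms : ∀ k, (lam k : ℂ) * ⟪ξ k, Q (ξ k)⟫_ℂ = 0 := congrFun <|
    (hasSum_zero_iff_of_nonneg fun k => mul_nonneg (Complex.zero_le_real.mpr (hlam k))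
      (hQ (ξ k) ▸ CStarModule.inner_self_nonneg)).mp (hK ▸ hψ Q)
  refine (hψ _).unique (hasSum_zero.congr_fun fun k => ?_)
  rcases mul_eq_zero.mp (hterms k) with hk | hk
  · rw [hk, zero_mul]
  · rw [hQ, inner_self_eq_zero] at hk
    simp only [comp_apply, hk, map_zero, inner_zero_right, mul_zero]

end DiagonalForm

theorem Submodule.eq_starProjection_comp_add (K : Submodule ℂ H) [K.HasOrthogonalProjection]
    (X : H →L[ℂ] H) :
    X = K.starProjection ∘L X + Kᗮ.starProjection ∘L X ∘L K.starProjection +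
      Kᗮ.starProjection ∘L X ∘L Kᗮ.starProjection := by
  simp only [K.starProjection_orthogonal', ← ContinuousLinearMap.mul_def]
  noncomm_ring

theorem Submodule.starProjection_singleton_eq_smulRight {e : H} (he : ‖e‖ = 1) :
    (ℂ ∙ e).starProjection = (innerSL ℂ e).smulRight e :=
  ContinuousLinearMap.ext fun x => Submodule.starProjection_unit_singleton ℂ he x

theorem exists_state_mul_apply_compression_eq (ψ : (H →L[ℂ] H) →ₗ[ℂ] ℂ)
    (hψpos : ∀ A : H →L[ℂ] H, A.IsPositive → 0 ≤ ψ A) (hψ1 : ψ 1 = 1)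
    (K : Submodule ℂ H) [K.HasOrthogonalProjection]
    (hK : ψ K.starProjection = 0 → ∀ X, ψ (K.starProjection ∘L X ∘L K.starProjection) = 0) :
    ∃ φ : (H →L[ℂ] H) →ₗ[ℂ] ℂ, (∀ A : H →L[ℂ] H, A.IsPositive → 0 ≤ φ A) ∧ φ 1 = 1 ∧
      ∀ X, φ (K.starProjection ∘L X ∘L K.starProjection) * ψ K.starProjection =
        ψ (K.starProjection ∘L X ∘L K.starProjection) := by
  set Q := K.starProjection
  by_cases h0 : ψ Q = 0
  · exact ⟨ψ, hψpos, hψ1, fun X => by rw [h0, mul_zero, hK h0]⟩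
  have hQ : Q * Q = Q := K.isIdempotentElem_starProjection.eq
  have hQ' : ∀ Y, Q * (Q * Y) = Q * Y := fun Y => by rw [← mul_assoc, hQ]
  have hinv : 0 ≤ (ψ Q)⁻¹ := by
    have := hψpos _ (isPositive_one.conj_starProjection K)
    rwa [← ContinuousLinearMap.mul_def, ← ContinuousLinearMap.mul_def, one_mul, hQ,
      ← inv_nonneg] at this
  refine ⟨(ψ Q)⁻¹ • ψ ∘ₗ LinearMap.mulLeftRight ℂ (Q, Q), fun A hA => ?_, ?_, fun X => ?_⟩
  all_goals simp only [LinearMap.smul_apply, LinearMap.comp_apply, LinearMap.mulLeftRight_apply,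
    smul_eq_mul]
  · exact mul_nonneg hinv (hψpos _ (hA.conj_starProjection K))
  · rw [mul_one, hQ, inv_mul_cancel₀ h0]
  · simp only [← ContinuousLinearMap.mul_def, mul_assoc, hQ, hQ']
    field_simp

theorem exists_eq_smul_of_apply_compression_eq (ψ φ : (H →L[ℂ] H) →ₗ[ℂ] ℂ) {T : H →L[ℂ] H}
    (hψT : ∀ (f : H →L[ℂ] ℂ) v, ψ (f.smulRight v) = f (T v)) (e : H)
    (hpres : ∀ X : H →L[ℂ] H,
      ψ (⟪e, X e⟫_ℂ • (ℂ ∙ e).starProjection +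
        φ ((ℂ ∙ e)ᗮ.starProjection ∘L X ∘L (ℂ ∙ e)ᗮ.starProjection) • (ℂ ∙ e)ᗮ.starProjection) =
        ψ X) :
    ∃ μ : ℂ, T e = μ • e := by
  suffices T e ∈ (ℂ ∙ e)ᗮᗮ by
    obtain ⟨μ, hμ⟩ := Submodule.mem_span_singleton.mp ((ℂ ∙ e).orthogonal_orthogonal ▸ this)
    exact ⟨μ, hμ.symm⟩
  intro v hv
  have hve : ⟪v, e⟫_ℂ = 0 := Submodule.mem_orthogonal_singleton_iff_inner_left.mp hv
  have hQX : (ℂ ∙ e)ᗮ.starProjection ∘L (innerSL ℂ v).smulRight e = 0 := by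
    ext x
    simp only [comp_apply, smulRight_apply, map_smul,
      Submodule.starProjection_orthogonalComplement_singleton_eq_zero, smul_zero, zero_apply]
  have := hpres ((innerSL ℂ v).smulRight e)
  rw [← comp_assoc, hQX, zero_comp, smulRight_apply, innerSL_apply_apply, hve, zero_smul,
    inner_zero_right, map_zero, zero_smul, zero_smul, add_zero, map_zero, hψT,
    innerSL_apply_apply] at this
  exact this.symm

theorem apply_eq_mul_inner_add_apply_compression (ψ : (H →L[ℂ] H) →ₗ[ℂ] ℂ) {T : H →L[ℂ] H}
    (hψT : ∀ (f : H →L[ℂ] ℂ) v, ψ (f.smulRight v) = f (T v))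
    (hT : (T : H →ₗ[ℂ] H).IsSymmetric) {e : H} (he : ‖e‖ = 1) {μ : ℂ} (hTe : T e = μ • e)
    (X : H →L[ℂ] H) :
    ψ X = μ * ⟪e, X e⟫_ℂ + ψ ((ℂ ∙ e)ᗮ.starProjection ∘L X ∘L (ℂ ∙ e)ᗮ.starProjection) := by
  have hPX : (ℂ ∙ e).starProjection ∘L X = (innerSL ℂ e ∘L X).smulRight e := by
    ext x
    simp [Submodule.starProjection_unit_singleton ℂ he]
  have hQXP : (ℂ ∙ e)ᗮ.starProjection ∘L X ∘L (ℂ ∙ e).starProjection =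
      (innerSL ℂ e).smulRight ((ℂ ∙ e)ᗮ.starProjection (X e)) := by
    ext x
    simp [Submodule.starProjection_unit_singleton ℂ he]
  have hQXe : ⟪e, (ℂ ∙ e)ᗮ.starProjection (X e)⟫_ℂ = 0 :=
    Submodule.mem_orthogonal_singleton_iff_inner_right.mp (Submodule.starProjection_apply_mem _ _)
  conv_lhs => rw [(ℂ ∙ e).eq_starProjection_comp_add X]
  rw [map_add, map_add, hPX, hQXP, hψT, hψT]
  have hTQXe : ⟪e, T ((ℂ ∙ e)ᗮ.starProjection (X e))⟫_ℂ = 0 := by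
    rw [← coe_coe T, ← hT, coe_coe, hTe, inner_smul_left, hQXe, mul_zero]
  simp only [comp_apply, innerSL_apply_apply, hTe, map_smul, smul_eq_mul, hTQXe, add_zero]

theorem exists_state_apply_compression_eq_of_eigenvector (ψ : (H →L[ℂ] H) →ₗ[ℂ] ℂ)
    (hψpos : ∀ A : H →L[ℂ] H, A.IsPositive → 0 ≤ ψ A) (hψ1 : ψ 1 = 1) {T : H →L[ℂ] H}
    (hψT : ∀ (f : H →L[ℂ] ℂ) v, ψ (f.smulRight v) = f (T v))
    (hT : (T : H →ₗ[ℂ] H).IsSymmetric) {e : H} (he : ‖e‖ = 1) {μ : ℂ} (hTe : T e = μ • e)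
    (hK : ψ (ℂ ∙ e)ᗮ.starProjection = 0 →
      ∀ X, ψ ((ℂ ∙ e)ᗮ.starProjection ∘L X ∘L (ℂ ∙ e)ᗮ.starProjection) = 0) :
    ∃ φ : (H →L[ℂ] H) →ₗ[ℂ] ℂ, (∀ A : H →L[ℂ] H, A.IsPositive → 0 ≤ φ A) ∧ φ 1 = 1 ∧
      ∀ X : H →L[ℂ] H,
        ψ (⟪e, X e⟫_ℂ • (ℂ ∙ e).starProjection +
          φ ((ℂ ∙ e)ᗮ.starProjection ∘L X ∘L (ℂ ∙ e)ᗮ.starProjection) • (ℂ ∙ e)ᗮ.starProjection) =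
          ψ X := by
  obtain ⟨φ, hφpos, hφ1, hφ⟩ := exists_state_mul_apply_compression_eq ψ hψpos hψ1 (ℂ ∙ e)ᗮ hK
  refine ⟨φ, hφpos, hφ1, fun X => ?_⟩
  have hP : ψ (ℂ ∙ e).starProjection = μ := by
    rw [Submodule.starProjection_singleton_eq_smulRight he, hψT, innerSL_apply_apply, hTe,
      inner_smul_right, inner_self_eq_one_of_norm_eq_one he, mul_one]
  rw [map_add, map_smul, map_smul, hP, smul_eq_mul, smul_eq_mul, hφ,
    apply_eq_mul_inner_add_apply_compression ψ hψT hT he hTe X, mul_comm]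

end

theorem expectation_preserving_iff_eigenvector_general
    (H : Type*) [NormedAddCommGroup H] [InnerProductSpace ℂ H]
    (esharp : H) (he : ‖esharp‖ = 1)
    (P : H →L[ℂ] H) (hP : ∀ x, P x = (inner ℂ esharp x : ℂ) • esharp)
    (ξ : ℕ → H) (hξ : Orthonormal ℂ ξ)
    (lamk : ℕ → ℝ) (hlamk : ∀ k, 0 ≤ lamk k)
    (hlamsum : HasSum lamk 1)
    (T : H →L[ℂ] H)
    (hT : ∀ x, HasSum (fun k => (lamk k : ℂ) • ((inner ℂ (ξ k) x : ℂ) • ξ k)) (T x))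
    (ψT : (H →L[ℂ] H) → ℂ)
    (hψT : ∀ Y, ψT Y = ∑' k, (lamk k : ℂ) * (inner ℂ (ξ k) (Y (ξ k)) : ℂ))
    (hψTsum : ∀ Y : H →L[ℂ] H,
      Summable (fun k => (lamk k : ℂ) * (inner ℂ (ξ k) (Y (ξ k)) : ℂ))) :
    (∃ φ : (H →L[ℂ] H) →ₗ[ℂ] ℂ,
        (∀ A : H →L[ℂ] H, A.IsPositive → 0 ≤ φ A) ∧ φ 1 = 1 ∧
        ∀ X : H →L[ℂ] H,
          ψT ((inner ℂ esharp (X esharp) : ℂ) • P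
              + φ ((1 - P) ∘L X ∘L (1 - P)) • (1 - P)) = ψT X)
    ↔ ∃ μ : ℂ, T esharp = μ • esharp := by
  have hψ : ∀ Y, HasSum (fun k => (lamk k : ℂ) * ⟪ξ k, Y (ξ k)⟫_ℂ) (ψT Y) :=
    fun Y => hψT Y ▸ (hψTsum Y).hasSum
  let ψ := IsLinearMap.mk' ψT (isLinearMap_of_hasSum_diagonal hψ)
  have hψrank := apply_smulRight_of_hasSum_diagonal hψ hT
  obtain rfl : P = (ℂ ∙ esharp).starProjection := by
    rw [Submodule.starProjection_singleton_eq_smulRight he]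
    exact ContinuousLinearMap.ext hP
  rw [← Submodule.starProjection_orthogonal']
  constructor
  · rintro ⟨φ, -, -, hpres⟩
    exact exists_eq_smul_of_apply_compression_eq ψ φ hψrank esharp hpres
  · rintro ⟨μ, hTe⟩
    exact exists_state_apply_compression_eq_of_eigenvector ψ
      (fun _ => nonneg_of_hasSum_diagonal hψ hlamk)
      (apply_one_of_hasSum_diagonal hψ hξ.1 hlamsum)
      hψrank (isSymmetric_of_hasSum_diagonal hT) he hTe
      (apply_compression_eq_zero_of_hasSum_diagonal hψ hlamk _)

/-- There exists a conditional expectation of the form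
`F_φ(A) = ⟨Ae_#,e_#⟩P_# + φ(P_#^⊥AP_#^⊥)P_#^⊥` (with `φ` a, not necessarily
normal, state on `B(H)`) preserving the normal state `ψ_T(A) = Tr(TA)` if and
only if `e_#` is an eigenvector of `T`.  Here `T` is a positive trace-class
operator with `Tr T = 1`, given by its spectral decomposition. -/
theorem expectation_preserving_iff_eigenvector
    (H : Type*) [NormedAddCommGroup H] [InnerProductSpace ℂ H] [CompleteSpace H]
    (esharp : H) (he : ‖esharp‖ = 1)
    (P : H →L[ℂ] H) (hP : ∀ x, P x = (inner ℂ esharp x : ℂ) • esharp)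
    (ξ : ℕ → H) (hξ : Orthonormal ℂ ξ)
    (lamk : ℕ → ℝ) (hlamk : ∀ k, 0 ≤ lamk k)
    (hlamsum : HasSum lamk 1)
    (T : H →L[ℂ] H)
    (hT : ∀ x, HasSum (fun k => (lamk k : ℂ) • ((inner ℂ (ξ k) x : ℂ) • ξ k)) (T x))
    (ψT : (H →L[ℂ] H) → ℂ)
    (hψT : ∀ Y, ψT Y = ∑' k, (lamk k : ℂ) * (inner ℂ (ξ k) (Y (ξ k)) : ℂ))
    (hψTsum : ∀ Y : H →L[ℂ] H,
      Summable (fun k => (lamk k : ℂ) * (inner ℂ (ξ k) (Y (ξ k)) : ℂ))) :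
    (∃ φ : (H →L[ℂ] H) →ₗ[ℂ] ℂ,
        (∀ A : H →L[ℂ] H, A.IsPositive → 0 ≤ φ A) ∧ φ 1 = 1 ∧
        ∀ X : H →L[ℂ] H,
          ψT ((inner ℂ esharp (X esharp) : ℂ) • P
              + φ ((1 - P) ∘L X ∘L (1 - P)) • (1 - P)) = ψT X)
    ↔ ∃ μ : ℂ, T esharp = μ • esharp :=
  expectation_preserving_iff_eigenvector_general H esharp he P hP ξ hξ lamk hlamk hlamsum T hT ψT
    hψT hψTsum
end

section
/- Factorization over the vacuum: let I, K ⊂ ℕ be disjoint finite sets and let X = ω_#(A)P_# + P_# A P_I + P_I A P_# + P_I A P_I + a P_{ℕ∖I} and Y = ω_#(B)P_# + P_# B P_K + P_K B P_# + P_K B P_K + b P_{ℕ∖K}, with A, B ∈ B(ℓ²({#}∪ℕ)), a, b ∈ ℂ. Then ⟨XY e_#, e_#⟩ = ⟨X e_#, e_#⟩ · ⟨Y e_#, e_#⟩. -/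
/-!
Applied to the vacuum, `Y` only produces `ω_#(B) e_# + P_K B e_#`. In the vacuum expectation of
`X`, every vector `e_k` with `k ∉ I` is annihilated by `P_#` and `P_I`, and the remaining term
`a (1 - P_# - P_I) e_k = a e_k` is orthogonal to `e_#`. Since `I ∩ K = ∅`, the component
`P_K B e_#` therefore contributes nothing, and `⟨XY e_#, e_#⟩ = ω_#(A) ω_#(B)`.
-/

open InnerProductSpace ContinuousLinearMap

section

variable {H ι : Type*} [NormedAddCommGroup H] [InnerProductSpace ℂ H]

/-- `P_S`, for an orthonormal family indexed by `{#} ∪ ι` with `#` encoded as `none`. -/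
noncomputable def coordProj (e : Option ι → H) (S : Finset ι) : H →L[ℂ] H :=
  ∑ i ∈ S, rankOne ℂ (e (some i)) (e (some i))

noncomputable def vacuumCompression (e : Option ι → H) (S : Finset ι) (A : H →L[ℂ] H) (a : ℂ) :
    H →L[ℂ] H :=
  (inner ℂ (e none) (A (e none)) : ℂ) • rankOne ℂ (e none) (e none)
    + rankOne ℂ (e none) (e none) ∘L A ∘L coordProj e S
    + coordProj e S ∘L A ∘L rankOne ℂ (e none) (e none)
    + coordProj e S ∘L A ∘L coordProj e S
    + a • (1 - rankOne ℂ (e none) (e none) - coordProj e S)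

variable {e : Option ι → H} (he : Orthonormal ℂ e)
include he

lemma coordProj_apply_of_forall_ne {S : Finset ι} {j : Option ι} (hj : ∀ i ∈ S, some i ≠ j) :
    coordProj e S (e j) = 0 := by
  rw [coordProj, sum_apply]
  refine Finset.sum_eq_zero fun i hi => ?_
  simp [he.inner_eq_zero (hj i hi)]

lemma inner_none_coordProj (S : Finset ι) (x : H) :
    inner ℂ (e none) (coordProj e S x) = 0 := by
  simp [coordProj, sum_apply, he.inner_eq_zero (Option.some_ne_none _).symm]

lemma vacuumCompression_apply_none (S : Finset ι) (A : H →L[ℂ] H) (a : ℂ) :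
    vacuumCompression e S A a (e none)
      = (inner ℂ (e none) (A (e none)) : ℂ) • e none + coordProj e S (A (e none)) := by
  have hP : coordProj e S (e none) = 0 :=
    coordProj_apply_of_forall_ne he fun i _ => Option.some_ne_none i
  simp [vacuumCompression, hP, he.1 none]

lemma inner_vacuumCompression_apply_none (S : Finset ι) (A : H →L[ℂ] H) (a : ℂ) :
    inner ℂ (e none) (vacuumCompression e S A a (e none)) = inner ℂ (e none) (A (e none)) := by
  simp [vacuumCompression_apply_none he, he.1 none, inner_none_coordProj he]

lemma inner_vacuumCompression_apply_some_of_notMem {S : Finset ι} {k : ι} (hk : k ∉ S)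
    (A : H →L[ℂ] H) (a : ℂ) :
    inner ℂ (e none) (vacuumCompression e S A a (e (some k))) = 0 := by
  have hP : coordProj e S (e (some k)) = 0 :=
    coordProj_apply_of_forall_ne he fun i hi h => hk (Option.some_injective _ h ▸ hi)
  simp [vacuumCompression, hP, he.inner_eq_zero (Option.some_ne_none k).symm]

lemma inner_vacuumCompression_apply_coordProj {S T : Finset ι} (hST : Disjoint S T)
    (A : H →L[ℂ] H) (a : ℂ) (x : H) :
    inner ℂ (e none) (vacuumCompression e S A a (coordProj e T x)) = 0 := by
  simp only [coordProj, sum_apply, rankOne_apply, map_sum, map_smul, inner_sum, inner_smul_right]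
  exact Finset.sum_eq_zero fun k hk => by
    rw [inner_vacuumCompression_apply_some_of_notMem he (Finset.disjoint_right.mp hST hk), mul_zero]

lemma inner_vacuumCompression_comp_apply_none {I K : Finset ι} (hIK : Disjoint I K)
    (A B : H →L[ℂ] H) (a b : ℂ) :
    inner ℂ (e none) ((vacuumCompression e I A a ∘L vacuumCompression e K B b) (e none))
      = inner ℂ (e none) (vacuumCompression e I A a (e none))
        * inner ℂ (e none) (vacuumCompression e K B b (e none)) := by
  rw [inner_vacuumCompression_apply_none he, inner_vacuumCompression_apply_none he, comp_apply,
    vacuumCompression_apply_none he, map_add, map_smul, inner_add_right, inner_smul_right,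
    inner_vacuumCompression_apply_coordProj he hIK, add_zero,
    inner_vacuumCompression_apply_none he, mul_comm]

end

theorem vacuum_factorization_general
    (H : Type*) [NormedAddCommGroup H] [InnerProductSpace ℂ H]
    (e : HilbertBasis (Option ℕ) ℂ H)
    (ε : Option ℕ → Option ℕ → (H →L[ℂ] H))
    (hε : ∀ m n x, ε m n x = (inner ℂ (e n) x : ℂ) • e m)
    (I K : Finset ℕ) (hIK : Disjoint I K)
    (A B : H →L[ℂ] H) (a b : ℂ) (X Y : H →L[ℂ] H)
    (hX : X = (inner ℂ (e none) (A (e none)) : ℂ) • ε none none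
        + ε none none ∘L A ∘L (∑ i ∈ I, ε (some i) (some i))
        + (∑ i ∈ I, ε (some i) (some i)) ∘L A ∘L ε none none
        + (∑ i ∈ I, ε (some i) (some i)) ∘L A ∘L (∑ i ∈ I, ε (some i) (some i))
        + a • (1 - ε none none - ∑ i ∈ I, ε (some i) (some i)))
    (hY : Y = (inner ℂ (e none) (B (e none)) : ℂ) • ε none none
        + ε none none ∘L B ∘L (∑ k ∈ K, ε (some k) (some k))
        + (∑ k ∈ K, ε (some k) (some k)) ∘L B ∘L ε none none
        + (∑ k ∈ K, ε (some k) (some k)) ∘L B ∘L (∑ k ∈ K, ε (some k) (some k))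
        + b • (1 - ε none none - ∑ k ∈ K, ε (some k) (some k))) :
    (inner ℂ (e none) ((X ∘L Y) (e none)) : ℂ)
      = (inner ℂ (e none) (X (e none)) : ℂ) * (inner ℂ (e none) (Y (e none)) : ℂ) := by
  obtain rfl : ε = fun m n => rankOne ℂ (e m) (e n) := by
    funext m n
    ext x
    exact hε m n x
  subst hX hY
  exact inner_vacuumCompression_comp_apply_none e.orthonormal hIK A B a b

/-- Factorization over the vacuum.  For disjoint finite
`I, K ⊂ ℕ` and `X = ω_#(A)P_# + P_#AP_I + P_IAP_# + P_IAP_I + aP_{ℕ∖I}`,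
`Y = ω_#(B)P_# + P_#BP_K + P_KBP_# + P_KBP_K + bP_{ℕ∖K}`, one has
`⟨XY e_#, e_#⟩ = ⟨X e_#, e_#⟩⟨Y e_#, e_#⟩`. -/
theorem vacuum_factorization
    (H : Type*) [NormedAddCommGroup H] [InnerProductSpace ℂ H] [CompleteSpace H]
    (e : HilbertBasis (Option ℕ) ℂ H)
    (ε : Option ℕ → Option ℕ → (H →L[ℂ] H))
    (hε : ∀ m n x, ε m n x = (inner ℂ (e n) x : ℂ) • e m)
    (I K : Finset ℕ) (hIK : Disjoint I K)
    (A B : H →L[ℂ] H) (a b : ℂ) (X Y : H →L[ℂ] H)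
    (hX : X = (inner ℂ (e none) (A (e none)) : ℂ) • ε none none
        + ε none none ∘L A ∘L (∑ i ∈ I, ε (some i) (some i))
        + (∑ i ∈ I, ε (some i) (some i)) ∘L A ∘L ε none none
        + (∑ i ∈ I, ε (some i) (some i)) ∘L A ∘L (∑ i ∈ I, ε (some i) (some i))
        + a • (1 - ε none none - ∑ i ∈ I, ε (some i) (some i)))
    (hY : Y = (inner ℂ (e none) (B (e none)) : ℂ) • ε none none
        + ε none none ∘L B ∘L (∑ k ∈ K, ε (some k) (some k))
        + (∑ k ∈ K, ε (some k) (some k)) ∘L B ∘L ε none none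
        + (∑ k ∈ K, ε (some k) (some k)) ∘L B ∘L (∑ k ∈ K, ε (some k) (some k))
        + b • (1 - ε none none - ∑ k ∈ K, ε (some k) (some k))) :
    (inner ℂ (e none) ((X ∘L Y) (e none)) : ℂ)
      = (inner ℂ (e none) (X (e none)) : ℂ) * (inner ℂ (e none) (Y (e none)) : ℂ) :=
  vacuum_factorization_general H e ε hε I K hIK A B a b X Y hX hY
end

section
/- Iterated factorization via conditional expectation: let M be a von Neumann algebra with a conditional expectation E onto a subalgebra N preserving a vector state ω = ⟨· Ω, Ω⟩, and suppose subalgebras M₁,…,Mₙ ⊆ M each containing N satisfy the pairwise independence condition: ω(XY) = ω(E(X)E(Y)) whenever X lies in the algebra generated by any subfamily {M_k : k ∈ S} ∪ N and Y in that generated by a disjoint subfamily. Then ω(X₁X₂⋯Xₙ) = ω(E(X₁)E(X₂)⋯E(Xₙ)) for all X_k ∈ M_k. -/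
/-!
Induct on the number of factors, carrying an extra left factor `Z ∈ N`. The element `Z * X₁` lies in
the algebra generated by `M₁` and `N`, the rest `P` of the product in the one generated by the other
`M_k` and `N`. Independence applied to `Z * X₁` and to `E (Z * X₁) ∈ N` (which `E` fixes) gives
`ω (Z * X₁ * P) = ω (E (Z * X₁) * P) = ω (Z * E X₁ * P)`, and `Z * E X₁` is again in `N`.
-/

section

variable {R A ι β : Type*} [CommSemiring R] [Semiring A] [Algebra R A]

def FactorizesOnDisjointSubfamilies (ω : A → β) (E : A → A) (M : ι → Subalgebra R A)
    (N : Subalgebra R A) : Prop :=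
  ∀ S S' : Finset ι, Disjoint S S' → ∀ X Y : A,
    X ∈ Algebra.adjoin R ((⋃ k ∈ S, (M k : Set A)) ∪ N) →
    Y ∈ Algebra.adjoin R ((⋃ k ∈ S', (M k : Set A)) ∪ N) →
    ω (X * Y) = ω (E X * E Y)

theorem list_prod_map_mem_adjoin_iUnion [DecidableEq ι] (M : ι → Subalgebra R A) {X : ι → A}
    {l : List ι} (hX : ∀ k ∈ l, X k ∈ M k) :
    (l.map X).prod ∈ Algebra.adjoin R (⋃ k ∈ l.toFinset, (M k : Set A)) := by
  refine Subalgebra.list_prod_mem _ fun x hx => ?_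
  obtain ⟨k, hk, rfl⟩ := List.mem_map.mp hx
  exact Algebra.subset_adjoin (Set.mem_biUnion (List.mem_toFinset.mpr hk) (hX k hk))

namespace FactorizesOnDisjointSubfamilies

variable {ω : A → β} {E : A → A} {M : ι → Subalgebra R A} {N : Subalgebra R A}

theorem apply_mul_eq_apply_mul_left (h : FactorizesOnDisjointSubfamilies ω E M N)
    (hE_mem : ∀ X, E X ∈ N) (hE_fix : ∀ Z ∈ N, E Z = Z) {S S' : Finset ι}
    (hSS' : Disjoint S S') {X Y : A}
    (hX : X ∈ Algebra.adjoin R ((⋃ k ∈ S, (M k : Set A)) ∪ N))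
    (hY : Y ∈ Algebra.adjoin R ((⋃ k ∈ S', (M k : Set A)) ∪ N)) :
    ω (X * Y) = ω (E X * Y) :=
  calc ω (X * Y) = ω (E X * E Y) := h S S' hSS' X Y hX hY
    _ = ω (E (E X) * E Y) := by rw [hE_fix _ (hE_mem X)]
    _ = ω (E X * Y) :=
      (h S S' hSS' (E X) Y (Algebra.subset_adjoin (Or.inr (hE_mem X))) hY).symm

theorem apply_mul_list_prod_map [DecidableEq ι] (h : FactorizesOnDisjointSubfamilies ω E M N)
    (hE_mem : ∀ X, E X ∈ N) (hE_fix : ∀ Z ∈ N, E Z = Z)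
    (hE_left : ∀ Z ∈ N, ∀ X, E (Z * X) = Z * E X) {X : ι → A} (hX : ∀ k, X k ∈ M k)
    {l : List ι} (hl : l.Nodup) {Z : A} (hZ : Z ∈ N) :
    ω (Z * (l.map X).prod) = ω (Z * (l.map (fun k => E (X k))).prod) := by
  induction l generalizing Z with
  | nil => rfl
  | cons k l ih =>
    obtain ⟨hkl, hl⟩ := List.nodup_cons.mp hl
    have hZX : Z * X k ∈ Algebra.adjoin R ((⋃ j ∈ ({k} : Finset ι), (M j : Set A)) ∪ N) :=
      Subalgebra.mul_mem _ (Algebra.subset_adjoin (Or.inr hZ))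
        (Algebra.subset_adjoin (Or.inl (Set.mem_biUnion (Finset.mem_singleton_self k) (hX k))))
    have hP : (l.map X).prod ∈ Algebra.adjoin R ((⋃ j ∈ l.toFinset, (M j : Set A)) ∪ N) :=
      Algebra.adjoin_mono Set.subset_union_left
        (list_prod_map_mem_adjoin_iUnion M fun j _ => hX j)
    have hdisj : Disjoint ({k} : Finset ι) l.toFinset := by simpa using hkl
    calc ω (Z * ((k :: l).map X).prod) = ω (Z * X k * (l.map X).prod) := by
          simp [mul_assoc]
      _ = ω (E (Z * X k) * (l.map X).prod) :=
          h.apply_mul_eq_apply_mul_left hE_mem hE_fix hdisj hZX hP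
      _ = ω (Z * E (X k) * (l.map (fun k => E (X k))).prod) := by
          rw [hE_left Z hZ]
          exact ih hl (N.mul_mem hZ (hE_mem _))
      _ = ω (Z * ((k :: l).map (fun k => E (X k))).prod) := by simp [mul_assoc]

end FactorizesOnDisjointSubfamilies

end

theorem iterated_factorization_general
    (Hs : Type*) [NormedAddCommGroup Hs] [InnerProductSpace ℂ Hs]
    (ω : (Hs →L[ℂ] Hs) → ℂ)
    (n : ℕ) (Msub : Fin n → Subalgebra ℂ (Hs →L[ℂ] Hs))
    (N : Subalgebra ℂ (Hs →L[ℂ] Hs))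
    (E : (Hs →L[ℂ] Hs) →ₗ[ℂ] (Hs →L[ℂ] Hs))
    (hErange : ∀ X, E X ∈ N)
    (hEfix : ∀ Z ∈ N, E Z = Z)
    (hEbimod : ∀ (Z W X : Hs →L[ℂ] Hs), Z ∈ N → W ∈ N →
      E (Z * X * W) = Z * E X * W)
    (hindep : ∀ (S S' : Finset (Fin n)), Disjoint S S' →
      ∀ X Y : Hs →L[ℂ] Hs,
        X ∈ Algebra.adjoin ℂ ((⋃ k ∈ S, (Msub k : Set (Hs →L[ℂ] Hs)))
            ∪ (N : Set (Hs →L[ℂ] Hs))) →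
        Y ∈ Algebra.adjoin ℂ ((⋃ k ∈ S', (Msub k : Set (Hs →L[ℂ] Hs)))
            ∪ (N : Set (Hs →L[ℂ] Hs))) →
        ω (X * Y) = ω (E X * E Y)) :
    ∀ X : Fin n → (Hs →L[ℂ] Hs), (∀ k, X k ∈ Msub k) →
      ω ((List.ofFn X).prod) = ω ((List.ofFn fun k => E (X k)).prod) := by
  intro X hX
  have hE_left : ∀ Z ∈ N, ∀ Y, E (Z * Y) = Z * E Y := fun Z hZ Y => by
    simpa using hEbimod Z 1 Y hZ N.one_mem
  have hfact : FactorizesOnDisjointSubfamilies ω E Msub N := hindep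
  simpa [List.ofFn_eq_map] using
    hfact.apply_mul_list_prod_map hErange hEfix hE_left hX (List.nodup_finRange n) N.one_mem

/-- Lemma 2.2 of the paper: Iterated factorization via a
conditional expectation.  Let `E` be a conditional expectation onto a
subalgebra `N` of `B(H)` preserving the vector state `ω = ⟨·Ω,Ω⟩`, and let
`M₁,…,Mₙ` be subalgebras each containing `N` such that
`ω(XY) = ω(E(X)E(Y))` whenever `X` (resp. `Y`) lies in the algebra generated
by a subfamily `{M_k : k ∈ S} ∪ N` (resp. a disjoint subfamily).  Then
`ω(X₁⋯Xₙ) = ω(E(X₁)⋯E(Xₙ))` for all `X_k ∈ M_k`. -/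
theorem iterated_factorization
    (Hs : Type*) [NormedAddCommGroup Hs] [InnerProductSpace ℂ Hs] [CompleteSpace Hs]
    (Ω : Hs) (hΩ : ‖Ω‖ = 1)
    (ω : (Hs →L[ℂ] Hs) → ℂ) (hω : ∀ X, ω X = (inner ℂ Ω (X Ω) : ℂ))
    (n : ℕ) (Msub : Fin n → Subalgebra ℂ (Hs →L[ℂ] Hs))
    (N : Subalgebra ℂ (Hs →L[ℂ] Hs))
    (hNM : ∀ k, N ≤ Msub k)
    (E : (Hs →L[ℂ] Hs) →ₗ[ℂ] (Hs →L[ℂ] Hs))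
    (hErange : ∀ X, E X ∈ N)
    (hEfix : ∀ Z ∈ N, E Z = Z)
    (hEbimod : ∀ (Z W X : Hs →L[ℂ] Hs), Z ∈ N → W ∈ N →
      E (Z * X * W) = Z * E X * W)
    (hEω : ∀ X, ω (E X) = ω X)
    (hindep : ∀ (S S' : Finset (Fin n)), Disjoint S S' →
      ∀ X Y : Hs →L[ℂ] Hs,
        X ∈ Algebra.adjoin ℂ ((⋃ k ∈ S, (Msub k : Set (Hs →L[ℂ] Hs)))
            ∪ (N : Set (Hs →L[ℂ] Hs))) →
        Y ∈ Algebra.adjoin ℂ ((⋃ k ∈ S', (Msub k : Set (Hs →L[ℂ] Hs)))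
            ∪ (N : Set (Hs →L[ℂ] Hs))) →
        ω (X * Y) = ω (E X * E Y)) :
    ∀ X : Fin n → (Hs →L[ℂ] Hs), (∀ k, X k ∈ Msub k) →
      ω ((List.ofFn X).prod) = ω ((List.ofFn fun k => E (X k)).prod) :=
  iterated_factorization_general Hs ω n Msub N E hErange hEfix hEbimod hindep
end

section
/- In B(ℓ²({#} ∪ ℕ)), with orthonormal basis {e_#} ∪ {e_i : i ∈ ℕ}, one has ⋂_{n∈ℕ} [B(span{e_#} ⊕ ℓ²({n, n+1, …})) ⊕ ℂ · P_{span{e_1,…,e_{n−1}}}] = ℂP_# + ℂP_#^⊥, i.e. the intersection consists exactly of the operators λP_# + μP_#^⊥ with λ, μ ∈ ℂ. -/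
/-- Two continuous linear maps agreeing on a Hilbert basis are equal. -/
lemma clm_ext_hilbertBasis {ι : Type*} {H : Type*} [NormedAddCommGroup H]
    [InnerProductSpace ℂ H] [CompleteSpace H] (e : HilbertBasis ι ℂ H)
    {f g : H →L[ℂ] H} (h : ∀ i, f (e i) = g (e i)) : f = g := by
  refine ContinuousLinearMap.ext_on
    (Submodule.dense_iff_topologicalClosure_eq_top.mpr e.dense_span) ?_
  rintro x ⟨i, rfl⟩
  exact h i

/-- Tail algebra computation.  In `B(ℓ²({#}∪ℕ))` (a Hilbert
space with orthonormal basis `{e_#} ∪ {e_i : i ∈ ℕ}`), let `Q_n` be the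
orthogonal projection onto the closed span of `{e_#} ∪ {e_i : i ≥ n}`, and let
`N_n := {X : X = Q_n X Q_n + c(1 − Q_n) for some c ∈ ℂ} ≅ B(H_{≥n}) ⊕ ℂ`.
Then `⋂_n N_n = ℂP_# + ℂP_#^⊥`, where `P_#` is the projection onto `ℂe_#`. -/
theorem tail_algebra_computation
    (H : Type*) [NormedAddCommGroup H] [InnerProductSpace ℂ H] [CompleteSpace H]
    (e : HilbertBasis (Option ℕ) ℂ H)
    (Psharp : H →L[ℂ] H)
    (hPsharp : ∀ x, Psharp x = (inner ℂ (e none) x : ℂ) • e none)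
    (Q : ℕ → (H →L[ℂ] H))
    (hQsharp : ∀ n, Q n (e none) = e none)
    (hQi : ∀ n i, Q n (e (some i)) = if n ≤ i then e (some i) else 0)
    (hQsa : ∀ n, ContinuousLinearMap.adjoint (Q n) = Q n) :
    (⋂ n : ℕ, {X : H →L[ℂ] H | ∃ c : ℂ, X = Q n ∘L X ∘L Q n + c • (1 - Q n)})
      = {X : H →L[ℂ] H | ∃ lam mu : ℂ, X = lam • Psharp + mu • (1 - Psharp)} := by
  classical
  have horth := orthonormal_iff_ite.mp e.orthonormal
  have hnn : (inner ℂ (e none) (e none) : ℂ) = 1 := by simpa using horth none none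
  have hni : ∀ i : ℕ, (inner ℂ (e none) (e (some i)) : ℂ) = 0 := by
    intro i; simpa using horth none (some i)
  -- Psharp on basis vectors
  have hPnone : Psharp (e none) = e none := by rw [hPsharp, hnn, one_smul]
  have hPi : ∀ i : ℕ, Psharp (e (some i)) = 0 := by
    intro i; rw [hPsharp, hni, zero_smul]
  ext X
  simp only [Set.mem_iInter, Set.mem_setOf_eq]
  constructor
  · intro hX
    -- X e_i = c_n e_i for i < n
    have key : ∀ n : ℕ, ∀ i : ℕ, i < n → X (e (some i)) = (hX n).choose • e (some i) := by
      intro n i hin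
      have hc := congrArg (fun T : H →L[ℂ] H => T (e (some i))) (hX n).choose_spec
      simp only [ContinuousLinearMap.add_apply, ContinuousLinearMap.comp_apply,
        ContinuousLinearMap.smul_apply, ContinuousLinearMap.sub_apply,
        ContinuousLinearMap.one_apply] at hc
      have hQ0 : Q n (e (some i)) = 0 := by rw [hQi]; simp [Nat.not_le.mpr hin]
      rw [hQ0] at hc
      simpa using hc
    set mu : ℂ := (hX 1).choose with hmu
    -- all c_n (n ≥ 1) equal mu, so X e_i = mu e_i
    have hXi : ∀ i : ℕ, X (e (some i)) = mu • e (some i) := by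
      intro i
      have h1 := key (i + 1) i (Nat.lt_succ_self i)
      have h0 := key (i + 1) 0 (Nat.succ_pos i)
      have h0' := key 1 0 Nat.zero_lt_one
      have hcc : (hX (i+1)).choose = mu := by
        have h2 : ((hX (i+1)).choose - mu) • e (some 0) = 0 := by
          rw [sub_smul, ← h0, hmu, ← h0', sub_self]
        rcases smul_eq_zero.mp h2 with h | h
        · exact sub_eq_zero.mp h
        · exact absurd h (e.orthonormal.ne_zero (some 0))
      rw [h1, hcc]
    -- X e_none is fixed by every Q n
    have hQXnone : ∀ n : ℕ, Q n (X (e none)) = X (e none) := by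
      intro n
      have hc := congrArg (fun T : H →L[ℂ] H => T (e none)) (hX n).choose_spec
      simp only [ContinuousLinearMap.add_apply, ContinuousLinearMap.comp_apply,
        ContinuousLinearMap.smul_apply, ContinuousLinearMap.sub_apply,
        ContinuousLinearMap.one_apply, hQsharp n] at hc
      rw [sub_self, smul_zero, add_zero] at hc
      exact hc.symm
    set lam : ℂ := inner ℂ (e none) (X (e none)) with hlam
    have hXnone : X (e none) = lam • e none := by
      have hcoef : ∀ i : ℕ, (inner ℂ (e (some i)) (X (e none)) : ℂ) = 0 := by
        intro i
        rw [← hQXnone (i + 1), ← ContinuousLinearMap.adjoint_inner_left, hQsa, hQi]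
        simp
      have hzero : X (e none) - lam • e none = 0 := by
        have hall : ∀ j, (inner ℂ (e j) (X (e none) - lam • e none) : ℂ) = 0 := by
          rintro (_ | i)
          · rw [inner_sub_right, inner_smul_right, hnn, mul_one, hlam, sub_self]
          · rw [inner_sub_right, inner_smul_right, hcoef i]
            simp [horth (some i) none]
        have : e.repr (X (e none) - lam • e none) = 0 := by
          apply lp.ext
          funext j
          rw [e.repr_apply_apply]
          rw [hall j]; rfl
        exact e.repr.injective (by rw [this, map_zero])
      have := sub_eq_zero.mp hzero
      exact this
    refine ⟨lam, mu, clm_ext_hilbertBasis e ?_⟩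
    rintro (_ | i)
    · simp [ContinuousLinearMap.add_apply, ContinuousLinearMap.smul_apply,
        ContinuousLinearMap.sub_apply, ContinuousLinearMap.one_apply,
        hXnone, hPnone, smul_sub]
    · simp [ContinuousLinearMap.add_apply, ContinuousLinearMap.smul_apply,
        ContinuousLinearMap.sub_apply, ContinuousLinearMap.one_apply,
        hXi i, hPi i, smul_sub]
  · rintro ⟨lam, mu, rfl⟩ n
    refine ⟨mu, clm_ext_hilbertBasis e ?_⟩
    rintro (_ | i)
    · simp [ContinuousLinearMap.comp_apply, ContinuousLinearMap.add_apply,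
        ContinuousLinearMap.smul_apply, ContinuousLinearMap.sub_apply,
        ContinuousLinearMap.one_apply, hQsharp, hPnone, map_smul, map_sub]
    · by_cases hni' : n ≤ i
      · have hQ : Q n (e (some i)) = e (some i) := by rw [hQi]; simp [hni']
        simp [ContinuousLinearMap.comp_apply, ContinuousLinearMap.add_apply,
          ContinuousLinearMap.smul_apply, ContinuousLinearMap.sub_apply,
          ContinuousLinearMap.one_apply, hQ, hPi, map_smul, map_sub]
      · have hQ : Q n (e (some i)) = 0 := by rw [hQi]; simp [hni']
        simp [ContinuousLinearMap.comp_apply, ContinuousLinearMap.add_apply,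
          ContinuousLinearMap.smul_apply, ContinuousLinearMap.sub_apply,
          ContinuousLinearMap.one_apply, hQ, hPi, map_smul, map_sub]
end
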